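/- With C_V defined as the capacity C_V(E) = sup{ μ(E) : μ ∈ M₊^V(E), ‖μ‖_{M^V} ≤ 1 }, one has for every Borel set E ⊆ ℝⁿ the upper bound C_V(E) ≤ sup_{y ∈ E} ( ∫∫_{Q_T} H(x-y,t) V(x,t) dx dt )^{-1}, with equality when E is compact. -/

import Mathlib

open MeasureTheory Filter Set
open scoped ENNReal

/-- The Gaussian heat kernel on ℝⁿ. -/
noncomputable def heatKernel (n : ℕ) (x : EuclideanSpace ℝ (Fin n)) (t : ℝ) : ℝ :=
  (4 * Real.pi * t) ^ (-(n : ℝ) / 2) * Real.exp (-‖x‖ ^ 2 / (4 * t))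

/-- The norm `‖μ‖_{M^V} = ∫∫_{Q_T} (∫ H(x-y,t) dμ(y)) V(x,t) dx dt`. -/
noncomputable def Vnorm (n : ℕ) (T : ℝ) (V : EuclideanSpace ℝ (Fin n) → ℝ → ℝ)
    (μ : Measure (EuclideanSpace ℝ (Fin n))) : ℝ≥0∞ :=
  ∫⁻ x, ∫⁻ t in Set.Ioo (0 : ℝ) T,
    (∫⁻ y, ENNReal.ofReal (heatKernel n (x - y) t) ∂μ) * ENNReal.ofReal (V x t)

/-- The capacity `C_V(E)`, defined as the supremum of `μ(E)` over positive measures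
concentrated on `E` with `‖μ‖_{M^V} ≤ 1`. -/
noncomputable def capV (n : ℕ) (T : ℝ) (V : EuclideanSpace ℝ (Fin n) → ℝ → ℝ)
    (E : Set (EuclideanSpace ℝ (Fin n))) : ℝ≥0∞ :=
  sSup {r : ℝ≥0∞ | ∃ μ : Measure (EuclideanSpace ℝ (Fin n)),
    μ Eᶜ = 0 ∧ Vnorm n T V μ ≤ 1 ∧ r = μ E}

/-!
Testing the capacity against the normalized Dirac masses `δ_y / ‖δ_y‖_{M^V}`, `y ∈ E`, gives
the lower bound; note `‖δ_y‖_{M^V} = ∫∫_{Q_T} H(x-y,t) V(x,t) dx dt`. For the upper bound,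
Tonelli gives `μ(E) · inf_{y ∈ E} ‖δ_y‖_{M^V} ≤ ∫ ‖δ_y‖_{M^V} dμ(y) ≤ ‖μ‖_{M^V}`. The second
inequality also holds when `μ` is not σ-finite: since `H > 0`, the potential `∫ H(x-y,t) dμ(y)`
is then infinite on all of `Q_T`, so `‖μ‖_{M^V}` is `∞` unless `V = 0` a.e.
-/

theorem sigmaFinite_of_lintegral_ne_top {α : Type*} [MeasurableSpace α]
    {μ : Measure α} {f : α → ℝ≥0∞} (hf : AEMeasurable f μ) (hf_ne_zero : ∀ a, f a ≠ 0)
    (hf_int : ∫⁻ a, f a ∂μ ≠ ∞) : SigmaFinite μ := by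
  refine Measure.sigmaFinite_of_countable (S := range fun k : ℕ => {a | (k : ℝ≥0∞)⁻¹ ≤ f a})
    (countable_range _) ?_ ?_
  · rintro _ ⟨k, rfl⟩
    have hk : (k : ℝ≥0∞)⁻¹ ≠ 0 := by simp
    have hmarkov := mul_meas_ge_le_lintegral₀ hf (k : ℝ≥0∞)⁻¹
    exact lt_top_iff_ne_top.2 fun h ↦ hf_int <| top_le_iff.1 <| by
      rwa [h, ENNReal.mul_top hk] at hmarkov
  · refine eq_univ_of_forall fun a ↦ mem_sUnion.2 ?_
    obtain ⟨k, hk⟩ := ENNReal.exists_inv_nat_lt (hf_ne_zero a)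
    exact ⟨_, mem_range_self k, hk.le⟩

theorem lintegral_lintegral_mul_le_of_ne_zero {α β : Type*} [MeasurableSpace α]
    [MeasurableSpace β] (μ : Measure α) {ν : Measure β} [SFinite ν] {k : β → α → ℝ≥0∞}
    (hk : Measurable (Function.uncurry k)) (hk_ne_zero : ∀ᵐ b ∂ν, ∀ a, k b a ≠ 0)
    {v : β → ℝ≥0∞} (hv : Measurable v) :
    ∫⁻ a, ∫⁻ b, k b a * v b ∂ν ∂μ ≤ ∫⁻ b, (∫⁻ a, k b a ∂μ) * v b ∂ν := by
  by_cases hμ : SigmaFinite μ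
  · refine le_of_eq ?_
    rw [lintegral_lintegral_swap
      ((hk.comp measurable_swap).mul (hv.comp measurable_snd)).aemeasurable]
    exact lintegral_congr fun b ↦ lintegral_mul_const _ (hk.comp measurable_prodMk_left)
  have h_top : ∀ᵐ b ∂ν, ∫⁻ a, k b a ∂μ = ∞ := hk_ne_zero.mono fun b hb ↦ by
    by_contra h
    exact hμ (sigmaFinite_of_lintegral_ne_top (hk.comp measurable_prodMk_left).aemeasurable hb h)
  rw [lintegral_congr_ae (h_top.mono fun b hb ↦ by rw [hb]), lintegral_const_mul _ hv]
  rcases eq_or_ne (∫⁻ b, v b ∂ν) 0 with hv0 | hv0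
  · have hv_ae : v =ᵐ[ν] 0 := (lintegral_eq_zero_iff hv).1 hv0
    have h_inner : ∀ a, ∫⁻ b, k b a * v b ∂ν = 0 := fun a ↦
      (lintegral_congr_ae (hv_ae.mono fun b hb ↦ by simp [hb])).trans lintegral_zero
    simp [h_inner]
  · rw [ENNReal.top_mul hv0]
    exact le_top

theorem heatKernel_pos (n : ℕ) (z : EuclideanSpace ℝ (Fin n)) {t : ℝ} (ht : 0 < t) :
    0 < heatKernel n z t := by
  unfold heatKernel; positivity

@[fun_prop]
theorem Measurable.heatKernel {α : Type*} [MeasurableSpace α] {n : ℕ}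
    {f : α → EuclideanSpace ℝ (Fin n)} {g : α → ℝ} (hf : Measurable f) (hg : Measurable g) :
    Measurable fun a ↦ heatKernel n (f a) (g a) := by
  unfold _root_.heatKernel; fun_prop

section Capacity

variable {n : ℕ} {T : ℝ} {V : EuclideanSpace ℝ (Fin n) → ℝ → ℝ}

open Measure

theorem Vnorm_dirac (y : EuclideanSpace ℝ (Fin n)) :
    Vnorm n T V (dirac y) = ∫⁻ x, ∫⁻ t in Ioo (0 : ℝ) T,
      ENNReal.ofReal (heatKernel n (x - y) t * V x t) := by
  simp only [Vnorm, lintegral_dirac]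
  exact lintegral_congr fun x ↦ setLIntegral_congr_fun measurableSet_Ioo fun t ht ↦
    (ENNReal.ofReal_mul (heatKernel_pos n _ ht.1).le).symm

theorem Vnorm_dirac_eq_lintegral_prod
    (hVm : Measurable fun p : EuclideanSpace ℝ (Fin n) × ℝ => V p.1 p.2)
    (y : EuclideanSpace ℝ (Fin n)) :
    Vnorm n T V (dirac y) = ∫⁻ p, ENNReal.ofReal (heatKernel n (p.1 - y) p.2) *
      ENNReal.ofReal (V p.1 p.2) ∂(volume.prod (volume.restrict (Ioo (0 : ℝ) T))) := by
  rw [lintegral_prod _ (by fun_prop)]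
  simp only [Vnorm, lintegral_dirac]

theorem measurable_Vnorm_dirac
    (hVm : Measurable fun p : EuclideanSpace ℝ (Fin n) × ℝ => V p.1 p.2) :
    Measurable fun y ↦ Vnorm n T V (dirac y) := by
  simp only [Vnorm_dirac_eq_lintegral_prod hVm]
  exact Measurable.lintegral_prod_left (by fun_prop)

theorem Vnorm_smul_dirac
    (hVm : Measurable fun p : EuclideanSpace ℝ (Fin n) × ℝ => V p.1 p.2)
    (c : ℝ≥0∞) (y : EuclideanSpace ℝ (Fin n)) :
    Vnorm n T V (c • dirac y) = c * Vnorm n T V (dirac y) := by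
  calc Vnorm n T V (c • dirac y)
      = ∫⁻ p, c * (ENNReal.ofReal (heatKernel n (p.1 - y) p.2) * ENNReal.ofReal (V p.1 p.2))
          ∂(volume.prod (volume.restrict (Ioo (0 : ℝ) T))) := by
        rw [lintegral_prod _ (by fun_prop)]
        simp only [Vnorm, lintegral_smul_measure, lintegral_dirac, smul_eq_mul, mul_assoc]
    _ = c * Vnorm n T V (dirac y) := by
        rw [lintegral_const_mul _ (by fun_prop), Vnorm_dirac_eq_lintegral_prod hVm]

theorem lintegral_Vnorm_dirac_le
    (hVm : Measurable fun p : EuclideanSpace ℝ (Fin n) × ℝ => V p.1 p.2)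
    (μ : Measure (EuclideanSpace ℝ (Fin n))) :
    ∫⁻ y, Vnorm n T V (dirac y) ∂μ ≤ Vnorm n T V μ := by
  have hk_ne_zero : ∀ᵐ p ∂(volume : Measure (EuclideanSpace ℝ (Fin n))).prod
      (volume.restrict (Ioo (0 : ℝ) T)), ∀ y : EuclideanSpace ℝ (Fin n),
      ENNReal.ofReal (heatKernel n (p.1 - y) p.2) ≠ 0 := by
    filter_upwards [quasiMeasurePreserving_snd.ae (ae_restrict_mem measurableSet_Ioo)]
      with p hp y
    exact (ENNReal.ofReal_pos.2 (heatKernel_pos n _ hp.1)).ne'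
  calc ∫⁻ y, Vnorm n T V (dirac y) ∂μ
      = ∫⁻ y, ∫⁻ p, ENNReal.ofReal (heatKernel n (p.1 - y) p.2) * ENNReal.ofReal (V p.1 p.2)
          ∂(volume.prod (volume.restrict (Ioo (0 : ℝ) T))) ∂μ := by
        simp only [Vnorm_dirac_eq_lintegral_prod hVm]
    _ ≤ ∫⁻ p, (∫⁻ y, ENNReal.ofReal (heatKernel n (p.1 - y) p.2) ∂μ) *
          ENNReal.ofReal (V p.1 p.2) ∂(volume.prod (volume.restrict (Ioo (0 : ℝ) T))) :=
        lintegral_lintegral_mul_le_of_ne_zero μ (by fun_prop) hk_ne_zero (by fun_prop)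
    _ ≤ Vnorm n T V μ := lintegral_prod_le _

theorem capV_le_iSup_inv_Vnorm_dirac
    (hVm : Measurable fun p : EuclideanSpace ℝ (Fin n) × ℝ => V p.1 p.2)
    (E : Set (EuclideanSpace ℝ (Fin n))) :
    capV n T V E ≤ ⨆ y ∈ E, (Vnorm n T V (dirac y))⁻¹ := by
  refine sSup_le ?_
  rintro _ ⟨μ, -, hμ, rfl⟩
  set c := ⨅ y ∈ E, Vnorm n T V (dirac y)
  simp only [← ENNReal.inv_iInf]
  refine ENNReal.le_inv_iff_mul_le.2 ?_
  calc μ E * c ≤ c * μ {y | c ≤ Vnorm n T V (dirac y)} := by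
        rw [mul_comm]
        gcongr
        exact fun y hy ↦ biInf_le (fun y ↦ Vnorm n T V (dirac y)) hy
    _ ≤ ∫⁻ y, Vnorm n T V (dirac y) ∂μ :=
        mul_meas_ge_le_lintegral₀ (measurable_Vnorm_dirac hVm).aemeasurable c
    _ ≤ Vnorm n T V μ := lintegral_Vnorm_dirac_le hVm μ
    _ ≤ 1 := hμ

theorem iSup_inv_Vnorm_dirac_le_capV
    (hVm : Measurable fun p : EuclideanSpace ℝ (Fin n) × ℝ => V p.1 p.2)
    (E : Set (EuclideanSpace ℝ (Fin n))) :
    ⨆ y ∈ E, (Vnorm n T V (dirac y))⁻¹ ≤ capV n T V E := by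
  refine iSup₂_le fun y hy ↦ le_sSup ⟨(Vnorm n T V (dirac y))⁻¹ • dirac y,
    ?_, ?_, ?_⟩
  · simp [hy]
  · rw [Vnorm_smul_dirac hVm]
    exact ENNReal.inv_mul_le_one _
  · simp [hy]

end Capacity

theorem capV_le_sup_inv_general (n : ℕ) (T : ℝ)
    (V : EuclideanSpace ℝ (Fin n) → ℝ → ℝ)
    (hVm : Measurable (fun p : EuclideanSpace ℝ (Fin n) × ℝ => V p.1 p.2))
    (E : Set (EuclideanSpace ℝ (Fin n))) :
    capV n T V E ≤ (⨆ y ∈ E, (∫⁻ x, ∫⁻ t in Set.Ioo (0 : ℝ) T,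
        ENNReal.ofReal (heatKernel n (x - y) t * V x t))⁻¹) ∧
    (IsCompact E → capV n T V E = ⨆ y ∈ E, (∫⁻ x, ∫⁻ t in Set.Ioo (0 : ℝ) T,
        ENNReal.ofReal (heatKernel n (x - y) t * V x t))⁻¹) := by
  have h : capV n T V E = ⨆ y ∈ E, (Vnorm n T V (Measure.dirac y))⁻¹ :=
    le_antisymm (capV_le_iSup_inv_Vnorm_dirac hVm E) (iSup_inv_Vnorm_dirac_le_capV hVm E)
  simp only [Vnorm_dirac] at h
  exact ⟨h.le, fun _ ↦ h⟩

theorem capV_le_sup_inv (n : ℕ) (T : ℝ) (hT : 0 < T)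
    (V : EuclideanSpace ℝ (Fin n) → ℝ → ℝ) (hV : ∀ x t, 0 ≤ V x t)
    (hVm : Measurable (fun p : EuclideanSpace ℝ (Fin n) × ℝ => V p.1 p.2))
    (E : Set (EuclideanSpace ℝ (Fin n))) (hE : MeasurableSet E) :
    capV n T V E ≤ (⨆ y ∈ E, (∫⁻ x, ∫⁻ t in Set.Ioo (0 : ℝ) T,
        ENNReal.ofReal (heatKernel n (x - y) t * V x t))⁻¹) ∧
    (IsCompact E → capV n T V E = ⨆ y ∈ E, (∫⁻ x, ∫⁻ t in Set.Ioo (0 : ℝ) T,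
        ENNReal.ofReal (heatKernel n (x - y) t * V x t))⁻¹) :=
  capV_le_sup_inv_general n T V hVm E
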